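/- If F is a reversible finite automaton and ω is strongly almost periodic, then F(ω) is strongly almost periodic. -/
import Mathlib


/-- The factor of `ω` starting at `i` of length `n`. -/
def seg {α : Type*} (ω : ℕ → α) (i n : ℕ) : List α :=
  (List.range n).map (fun k => ω (i + k))

/-- `x` occurs in `ω` at position `i`. -/
def OccursAt {α : Type*} (ω : ℕ → α) (x : List α) (i : ℕ) : Prop :=
  seg ω i x.length = x

/-- Strongly almost periodic: every factor occurs in every sufficiently long factor. -/
def SAP {α : Type*} (ω : ℕ → α) : Prop :=
  ∀ x : List α, (∃ i, OccursAt ω x i) →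
    ∃ l, ∀ j, ∃ i, j ≤ i ∧ i + x.length ≤ j + l ∧ OccursAt ω x i

/-- Almost periodic: every factor occurring infinitely often occurs in every
sufficiently long factor. -/
def AP {α : Type*} (ω : ℕ → α) : Prop :=
  ∀ x : List α, {i | OccursAt ω x i}.Infinite →
    ∃ l, ∀ j, ∃ i, j ≤ i ∧ i + x.length ≤ j + l ∧ OccursAt ω x i

/-- Eventually strongly almost periodic: some suffix is strongly almost periodic. -/
def EAP {α : Type*} (ω : ℕ → α) : Prop :=
  ∃ n, SAP (fun i => ω (n + i))

/-- The state sequence of a finite automaton with transition `f` and initial state `q0`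
running on input `ω`. -/
def autoStates {σ δ q : Type*} (f : q → σ → q × δ) (q0 : q) (ω : ℕ → σ) : ℕ → q
  | 0 => q0
  | n + 1 => (f (autoStates f q0 ω n) (ω n)).1

/-- The output sequence `F(ω)` of a finite automaton. -/
def autoOutput {σ δ q : Type*} (f : q → σ → q × δ) (q0 : q) (ω : ℕ → σ) (n : ℕ) : δ :=
  (f (autoStates f q0 ω n) (ω n)).2

namespace SAPaux

variable {σ δ q : Type*}

lemma seg_length {α : Type*} (ω : ℕ → α) (i n : ℕ) : (seg ω i n).length = n := by
  simp [seg]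

lemma seg_eq_seg_iff {α : Type*} (ω : ℕ → α) (i j n : ℕ) :
    seg ω j n = seg ω i n ↔ ∀ k < n, ω (j + k) = ω (i + k) := by
  simp [seg, List.map_inj_left, List.mem_range]

lemma occursAt_seg_iff {α : Type*} (ω : ℕ → α) (i j n : ℕ) :
    OccursAt ω (seg ω i n) j ↔ ∀ k < n, ω (j + k) = ω (i + k) := by
  rw [OccursAt, seg_length, seg_eq_seg_iff]

lemma occursAt_seg_self {α : Type*} (ω : ℕ → α) (i n : ℕ) :
    OccursAt ω (seg ω i n) i := by
  rw [occursAt_seg_iff]; intro k _; rfl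

lemma seg_succ {α : Type*} (ω : ℕ → α) (i n : ℕ) :
    seg ω i (n + 1) = seg ω i n ++ [ω (i + n)] := by
  simp [seg, List.range_succ]

/-- The state transformation induced by a word. -/
def trans (f : q → σ → q × δ) (w : List σ) (s : q) : q :=
  w.foldl (fun s a => (f s a).1) s

lemma trans_nil (f : q → σ → q × δ) (s : q) : trans f [] s = s := rfl

lemma trans_append (f : q → σ → q × δ) (u v : List σ) (s : q) :
    trans f (u ++ v) s = trans f v (trans f u s) := List.foldl_append ..

lemma states_add (f : q → σ → q × δ) (q0 : q) (ω : ℕ → σ) (j m : ℕ) :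
    autoStates f q0 ω (j + m) = trans f (seg ω j m) (autoStates f q0 ω j) := by
  induction m with
  | zero => rfl
  | succ m ih =>
      rw [seg_succ, trans_append]
      show (f (autoStates f q0 ω (j + m)) (ω (j + m))).1 = _
      rw [ih]; rfl

lemma trans_bijective (f : q → σ → q × δ)
    (hrev : ∀ a : σ, ∀ p : q, ∃! p' : q, ∃ b : δ, f p' a = (p, b)) (w : List σ) :
    Function.Bijective (trans f w) := by
  induction w with
  | nil => exact Function.bijective_id
  | cons a w ih =>
      have hstep : Function.Bijective (fun s : q => (f s a).1) := by
        rw [Function.bijective_iff_existsUnique]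
        intro p
        obtain ⟨p', hp', hu⟩ := hrev a p
        refine ⟨p', ?_, fun y hy => hu y ?_⟩
        · obtain ⟨b, hb⟩ := hp'; rw [hb]
        · exact ⟨(f y a).2, by rw [← hy]⟩
      have : trans f (a :: w) = (trans f w) ∘ (fun s : q => (f s a).1) := rfl
      rw [this]
      exact ih.comp hstep

end SAPaux

namespace SAPaux

variable {σ δ q : Type*}

lemma seg_add {α : Type*} (ω : ℕ → α) (i a b : ℕ) :
    seg ω i (a + b) = seg ω i a ++ seg ω (i + a) b := by
  induction b with
  | zero => simp [seg]
  | succ b ih =>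
      rw [show a + (b + 1) = (a + b) + 1 from rfl, seg_succ, ih, seg_succ,
        List.append_assoc, show i + (a + b) = i + a + b by omega]

/-- The state transformation from position `i0` to position `j`. -/
def mu (f : q → σ → q × δ) (ω : ℕ → σ) (i0 j : ℕ) : q → q :=
  trans f (seg ω i0 (j - i0))

lemma mu_self (f : q → σ → q × δ) (ω : ℕ → σ) (i0 : ℕ) : mu f ω i0 i0 = id := by
  funext s; simp [mu, seg, trans]

lemma states_mu (f : q → σ → q × δ) (q0 : q) (ω : ℕ → σ) {i0 j : ℕ} (h : i0 ≤ j) :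
    autoStates f q0 ω j = mu f ω i0 j (autoStates f q0 ω i0) := by
  have := states_add f q0 ω i0 (j - i0)
  rwa [Nat.add_sub_cancel' h] at this

/-- Multipliers of occurrences (at positions `≥ i0`) of the length-`T` prefix at `i0`. -/
def Aset (f : q → σ → q × δ) (ω : ℕ → σ) (i0 T : ℕ) : Set (q → q) :=
  {g | ∃ j, i0 ≤ j ∧ (∀ k < T, ω (j + k) = ω (i0 + k)) ∧ mu f ω i0 j = g}

lemma id_mem_Aset (f : q → σ → q × δ) (ω : ℕ → σ) (i0 T : ℕ) :
    id ∈ Aset f ω i0 T :=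
  ⟨i0, le_rfl, fun _ _ => rfl, mu_self f ω i0⟩

lemma Aset_antitone (f : q → σ → q × δ) (ω : ℕ → σ) (i0 : ℕ) {T T' : ℕ} (h : T ≤ T') :
    Aset f ω i0 T' ⊆ Aset f ω i0 T := by
  rintro g ⟨j, hj, hocc, rfl⟩
  exact ⟨j, hj, fun k hk => hocc k (lt_of_lt_of_le hk h), rfl⟩

lemma bijective_of_mem_Aset (f : q → σ → q × δ) (ω : ℕ → σ) (i0 T : ℕ)
    (hrev : ∀ a : σ, ∀ p : q, ∃! p' : q, ∃ b : δ, f p' a = (p, b))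
    {g} (hg : g ∈ Aset f ω i0 T) : Function.Bijective g := by
  obtain ⟨j, _, _, rfl⟩ := hg
  exact trans_bijective f hrev _

lemma comp_mem (f : q → σ → q × δ) (ω : ℕ → σ) (i0 jw T' T : ℕ)
    (hjw : i0 ≤ jw) (hwocc : ∀ k < T', ω (jw + k) = ω (i0 + k))
    (hT : jw - i0 + T' ≤ T) {g} (hg : g ∈ Aset f ω i0 T) :
    (mu f ω i0 jw) ∘ g ∈ Aset f ω i0 T' := by
  obtain ⟨j, hj, hocc, rfl⟩ := hg
  refine ⟨j + (jw - i0), le_trans hj (Nat.le_add_right _ _), ?_, ?_⟩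
  · intro k hk
    have e1 : j + (jw - i0) + k = j + ((jw - i0) + k) := by omega
    have h1 := hocc ((jw - i0) + k) (by omega)
    have e2 : i0 + ((jw - i0) + k) = jw + k := by omega
    rw [e1, h1, e2, hwocc k hk]
  · have e3 : j + (jw - i0) - i0 = (j - i0) + (jw - i0) := by omega
    have e4 : seg ω (i0 + (j - i0)) (jw - i0) = seg ω i0 (jw - i0) := by
      rw [seg_eq_seg_iff]
      intro k hk
      have e5 : i0 + (j - i0) + k = j + k := by omega
      rw [e5, hocc k (by omega)]
    funext s
    simp only [mu, e3, seg_add, trans_append, e4, Function.comp_apply]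

end SAPaux

namespace SAPaux

variable {σ δ q : Type*}

lemma key [Finite q] (f : q → σ → q × δ) (q0 : q)
    (hrev : ∀ a : σ, ∀ p : q, ∃! p' : q, ∃ b : δ, f p' a = (p, b))
    (ω : ℕ → σ) (h : SAP ω) (i0 n : ℕ) :
    ∃ l, ∀ j, ∃ i, j ≤ i ∧ i + n ≤ j + l ∧ (∀ k < n, ω (i + k) = ω (i0 + k)) ∧
      autoStates f q0 ω i = autoStates f q0 ω i0 := by
  classical
  haveI : Fintype (q → q) := Fintype.ofFinite _
  -- stabilization of the decreasing family `Aset`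
  set N : ℕ → ℕ := fun T => (Aset f ω i0 (n + T)).ncard with hN
  obtain ⟨T₀, hT₀⟩ : ∃ T₀, N T₀ = sInf (Set.range N) := Nat.sInf_mem (Set.range_nonempty N)
  set T₁ : ℕ := n + T₀ with hT₁def
  have hstab : ∀ T, T₁ ≤ T → Aset f ω i0 T = Aset f ω i0 T₁ := by
    intro T hT
    refine Set.eq_of_subset_of_ncard_le (Aset_antitone f ω i0 hT) ?_ (Set.toFinite _)
    have e : n + (T - n) = T := by omega
    calc (Aset f ω i0 T₁).ncard = N T₀ := rfl
      _ ≤ N (T - n) := by rw [hT₀]; exact Nat.sInf_le ⟨T - n, rfl⟩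
      _ = (Aset f ω i0 T).ncard := by rw [hN]; simp only [e]
  have hnT₁ : n ≤ T₁ := Nat.le_add_right _ _
  -- closure under composition
  have hcomp : ∀ g ∈ Aset f ω i0 T₁, ∀ d ∈ Aset f ω i0 T₁,
      g ∘ d ∈ Aset f ω i0 T₁ := by
    rintro g ⟨jw, hjw, hwocc, rfl⟩ d hd
    have hd' : d ∈ Aset f ω i0 (jw - i0 + T₁) := by
      rcases le_total T₁ (jw - i0 + T₁) with hle | hle
      · rw [hstab _ hle]; exact hd
      · exact Aset_antitone f ω i0 hle hd
    exact comp_mem f ω i0 jw T₁ _ hjw hwocc le_rfl hd'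
  -- powers
  have hpow : ∀ g ∈ Aset f ω i0 T₁, ∀ k, g^[k] ∈ Aset f ω i0 T₁ := by
    intro g hg k
    induction k with
    | zero => exact id_mem_Aset f ω i0 T₁
    | succ k ih => rw [Function.iterate_succ]; exact hcomp _ ih _ hg
  -- inverses
  have hinv : ∀ g ∈ Aset f ω i0 T₁, ∃ h' ∈ Aset f ω i0 T₁, h' ∘ g = id := by
    intro g hg
    have hbij := bijective_of_mem_Aset f ω i0 T₁ hrev hg
    obtain ⟨a, b, hab, heq⟩ := Finite.exists_ne_map_eq_of_infinite (fun k : ℕ => g^[k + 1])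
    have main : ∀ a b : ℕ, a < b → g^[a + 1] = g^[b + 1] → ∃ h' ∈ Aset f ω i0 T₁, h' ∘ g = id := by
      intro a b hlt he
      have hid : g^[b - a] = id := by
        funext y
        obtain ⟨x, rfl⟩ := (hbij.iterate (a + 1)).2 y
        have : g^[(b - a) + (a + 1)] x = g^[b + 1] x := by
          congr 1; omega
        rw [Function.iterate_add_apply] at this
        rw [this, ← he]; rfl
      refine ⟨g^[b - a - 1], hpow g hg _, ?_⟩
      have : g^[(b - a - 1) + 1] = g^[b - a - 1] ∘ g := Function.iterate_succ g _
      rw [← this, show b - a - 1 + 1 = b - a by omega, hid]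
    rcases hab.lt_or_gt with hlt | hlt
    · exact main a b hlt heq
    · exact main b a hlt heq.symm
  -- choose witnesses for inverses, with a uniform bound
  have hwit : ∀ d : q → q, ∃ m : ℕ, d ∈ Aset f ω i0 T₁ → ∃ jd, i0 ≤ jd ∧ jd - i0 ≤ m ∧
      (∀ k < T₁, ω (jd + k) = ω (i0 + k)) ∧ (mu f ω i0 jd) ∘ d = id := by
    intro d
    by_cases hd : d ∈ Aset f ω i0 T₁
    · obtain ⟨h', hh', hinvd⟩ := hinv d hd
      obtain ⟨jd, h1, h2, h3⟩ := hh'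
      exact ⟨jd - i0, fun _ => ⟨jd, h1, le_rfl, h2, by rw [h3]; exact hinvd⟩⟩
    · exact ⟨0, fun c => absurd c hd⟩
  choose M hM using hwit
  set T : ℕ := T₁ + Finset.univ.sup M with hTdef
  have hTT₁ : T₁ ≤ T := Nat.le_add_right _ _
  -- production of occurrences with the right state
  have hprod : ∀ i, i0 ≤ i → (∀ k < T, ω (i + k) = ω (i0 + k)) →
      ∃ i', i ≤ i' ∧ i' + n ≤ i + T ∧ (∀ k < n, ω (i' + k) = ω (i0 + k)) ∧
        autoStates f q0 ω i' = autoStates f q0 ω i0 := by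
    intro i hi hiocc
    have hδ : mu f ω i0 i ∈ Aset f ω i0 T := ⟨i, hi, hiocc, rfl⟩
    rw [hstab T hTT₁] at hδ
    obtain ⟨jd, hjd, hjdm, hjdocc, hjdinv⟩ := hM (mu f ω i0 i) hδ
    have hsup : jd - i0 ≤ Finset.univ.sup M :=
      le_trans hjdm (Finset.le_sup (Finset.mem_univ _))
    refine ⟨i + (jd - i0), Nat.le_add_right _ _, by omega, ?_, ?_⟩
    · intro k hk
      have e1 : i + (jd - i0) + k = i + ((jd - i0) + k) := by omega
      have h1 := hiocc ((jd - i0) + k) (by omega)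
      have e2 : i0 + ((jd - i0) + k) = jd + k := by omega
      rw [e1, h1, e2, hjdocc k (by omega)]
    · have h2 := states_add f q0 ω i (jd - i0)
      have e4 : seg ω i (jd - i0) = seg ω i0 (jd - i0) := by
        rw [seg_eq_seg_iff]
        intro k hk
        exact hiocc k (by omega)
      rw [h2, e4, states_mu f q0 ω hi]
      have : trans f (seg ω i0 (jd - i0)) = mu f ω i0 jd := rfl
      rw [this, ← Function.comp_apply (f := mu f ω i0 jd), hjdinv, id_eq]
  -- conclude using SAP of ω
  obtain ⟨l, hl⟩ := h (seg ω i0 T) ⟨i0, occursAt_seg_self ω i0 T⟩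
  refine ⟨i0 + l, fun j => ?_⟩
  obtain ⟨i, h1, h2, h3⟩ := hl (max j i0)
  rw [seg_length] at h2
  rw [occursAt_seg_iff] at h3
  obtain ⟨i', h5, h6, h7, h8⟩ := hprod i (le_trans (le_max_right _ _) h1) h3
  exact ⟨i', le_trans (le_trans (le_max_left _ _) h1) h5, by omega, h7, h8⟩

end SAPaux

/-- Reversible finite automata preserve strong almost periodicity. -/
theorem sap_reversible_autoOutput {σ δ q : Type*} [Finite σ] [Finite δ] [Finite q]
    (f : q → σ → q × δ) (q0 : q)
    (hrev : ∀ a : σ, ∀ p : q, ∃! p' : q, ∃ b : δ, f p' a = (p, b))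
    (ω : ℕ → σ) (h : SAP ω) :
    SAP (autoOutput f q0 ω) := by
  intro y ⟨i0, hy⟩
  set n := y.length with hn
  obtain ⟨l, hl⟩ := SAPaux.key f q0 hrev ω h i0 n
  refine ⟨l, fun j => ?_⟩
  obtain ⟨i, h1, h2, h3, h4⟩ := hl j
  refine ⟨i, h1, h2, ?_⟩
  have hst : ∀ k, k ≤ n → autoStates f q0 ω (i + k) = autoStates f q0 ω (i0 + k) := by
    intro k hk
    induction k with
    | zero => simpa using h4
    | succ k ih =>
        have e1 : i + (k + 1) = (i + k) + 1 := rfl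
        have e2 : i0 + (k + 1) = (i0 + k) + 1 := rfl
        rw [e1, e2]
        show (f (autoStates f q0 ω (i + k)) (ω (i + k))).1
          = (f (autoStates f q0 ω (i0 + k)) (ω (i0 + k))).1
        rw [ih (by omega), h3 k (by omega)]
  have hout : ∀ k < n, autoOutput f q0 ω (i + k) = autoOutput f q0 ω (i0 + k) := by
    intro k hk
    unfold autoOutput
    rw [hst k (le_of_lt hk), h3 k hk]
  show seg (autoOutput f q0 ω) i y.length = y
  rw [← hy, ← hn, SAPaux.seg_length]
  exact (SAPaux.seg_eq_seg_iff (autoOutput f q0 ω) i0 i n).2 hout
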